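/- arXiv:math/0609293 — 7 statements merged into one kernel-verified Lean document; each statement's English description precedes it below -/
import Mathlib

section
/- Let X be a finite alphabet and let M₁, M₂ be monoids with surjective homomorphisms σ₁ : X* → M₁ and σ₂ : X* → M₂. If L_{σ₁}(M₁) = L_{σ₂}(M₂) then there is a monoid isomorphism ρ : M₁ → M₂ with σ₁ ∘ ρ = σ₂. -/
open FreeMonoid

section LoopPrelude

variable {X M : Type*} [Monoid M]

def barW {X : Type*} (w : List (X ⊕ X)) : List (X ⊕ X) := (w.map Sum.swap).reverse

def posW {X : Type*} (u : List X) : List (X ⊕ X) := u.map Sum.inl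

def negW {X : Type*} (v : List X) : List (X ⊕ X) := (v.map Sum.inr).reverse

inductive LStep (σ : FreeMonoid X →* M) : M → (X ⊕ X) → M → Prop
  | posW (a : M) (x : X) : LStep σ a (Sum.inl x) (a * σ (of x))
  | negW (a : M) (x : X) : LStep σ (a * σ (of x)) (Sum.inr x) a

inductive LPath (σ : FreeMonoid X →* M) : M → List (X ⊕ X) → M → Prop
  | nil (a : M) : LPath σ a [] a
  | cons {a b c : M} {l : X ⊕ X} {w : List (X ⊕ X)}
      (h₁ : LStep σ a l b) (h₂ : LPath σ b w c) : LPath σ a (l :: w) c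

def LoopProblem (σ : FreeMonoid X →* M) : Set (List (X ⊕ X)) := { w | LPath σ 1 w 1 }

end LoopPrelude

section SemiPrelude

variable {X S : Type*} [Semigroup S]

def SLoopProblem (f : X → S) : Set (List (X ⊕ X)) :=
  LoopProblem (FreeMonoid.lift (fun x => (f x : WithOne S)))

end SemiPrelude

/-!
A word `u v̄` labels a loop at `1` exactly when `σ u = σ v`, so equal loop problems force `σ₁` and
`σ₂` to have the same kernel congruence, and a surjective homomorphism identifies its target with
the quotient of `X*` by its kernel.
-/

section LoopPath

variable {X M : Type*} [Monoid M] {σ : FreeMonoid X →* M}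

theorem LPath.nil_iff {a b : M} : LPath σ a [] b ↔ a = b :=
  ⟨fun | .nil _ => rfl, fun h => h ▸ .nil a⟩

theorem LPath.append_iff {a c : M} {w₁ w₂ : List (X ⊕ X)} :
    LPath σ a (w₁ ++ w₂) c ↔ ∃ b, LPath σ a w₁ b ∧ LPath σ b w₂ c := by
  induction w₁ generalizing a with
  | nil => simp only [List.nil_append, LPath.nil_iff, exists_eq_left']
  | cons l t ih =>
    constructor
    · rintro (_ | ⟨hl, p⟩)
      obtain ⟨b, pt, pb⟩ := ih.mp p
      exact ⟨b, .cons hl pt, pb⟩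
    · rintro ⟨b, _ | ⟨hl, pt⟩, pb⟩
      exact .cons hl (ih.mpr ⟨b, pt, pb⟩)

theorem LPath.posW_iff {a b : M} {u : List X} :
    LPath σ a (posW u) b ↔ b = a * σ (ofList u) := by
  induction u generalizing a with
  | nil => simp [posW, LPath.nil_iff, eq_comm]
  | cons x t ih =>
    rw [ofList_cons, map_mul, ← mul_assoc]
    constructor
    · rintro (_ | ⟨⟨⟩, p⟩)
      exact ih.mp p
    · intro h
      exact .cons (.posW a x) (ih.mpr h)

theorem LPath.negW_iff {a b : M} {v : List X} :
    LPath σ a (negW v) b ↔ a = b * σ (ofList v) := by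
  induction v generalizing b with
  | nil => simp [negW, LPath.nil_iff]
  | cons x t ih =>
    have hsnoc : negW (x :: t) = negW t ++ [Sum.inr x] := by simp [negW]
    rw [hsnoc, LPath.append_iff, ofList_cons, map_mul, ← mul_assoc]
    constructor
    · rintro ⟨_, p, _ | ⟨⟨⟩, ⟨⟩⟩⟩
      exact ih.mp p
    · intro h
      exact ⟨_, ih.mpr h, .cons (.negW b x) (.nil b)⟩

theorem posW_append_negW_mem_loopProblem_iff (u v : FreeMonoid X) :
    posW (toList u) ++ negW (toList v) ∈ LoopProblem σ ↔ σ u = σ v := by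
  simp only [LoopProblem, Set.mem_ofPred_eq, LPath.append_iff, LPath.posW_iff, LPath.negW_iff,
    ofList_toList, one_mul, exists_eq_left]

theorem con_ker_eq_of_loopProblem_eq {M' : Type*} [Monoid M'] {σ' : FreeMonoid X →* M'}
    (h : LoopProblem σ = LoopProblem σ') : Con.ker σ = Con.ker σ' := by
  ext u v
  rw [Con.ker_rel, Con.ker_rel, ← posW_append_negW_mem_loopProblem_iff,
    ← posW_append_negW_mem_loopProblem_iff, h]

end LoopPath

theorem MonoidHom.exists_mulEquiv_comp_eq_of_ker_eq {N M₁ M₂ : Type*} [Monoid N] [Monoid M₁]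
    [Monoid M₂] {σ₁ : N →* M₁} {σ₂ : N →* M₂} (h₁ : Function.Surjective σ₁)
    (h₂ : Function.Surjective σ₂) (h : Con.ker σ₁ = Con.ker σ₂) :
    ∃ ρ : M₁ ≃* M₂, ∀ w, ρ (σ₁ w) = σ₂ w := by
  let e₁ := Con.quotientKerEquivOfSurjective σ₁ h₁
  refine ⟨e₁.symm.trans ((Con.congr (MulEquiv.refl N) h).trans
    (Con.quotientKerEquivOfSurjective σ₂ h₂)), fun w => ?_⟩
  have : e₁.symm (σ₁ w) = w := e₁.symm_apply_eq.mpr rfl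
  simp only [MulEquiv.trans_apply, this]
  rfl

theorem loop_problem_determines_monoid {X M₁ M₂ : Type*} [Monoid M₁] [Monoid M₂]
    (σ₁ : FreeMonoid X →* M₁) (σ₂ : FreeMonoid X →* M₂)
    (h₁ : Function.Surjective σ₁) (h₂ : Function.Surjective σ₂)
    (h : LoopProblem σ₁ = LoopProblem σ₂) :
    ∃ ρ : M₁ ≃* M₂, ∀ w : FreeMonoid X, ρ (σ₁ w) = σ₂ w :=
  MonoidHom.exists_mulEquiv_comp_eq_of_ker_eq h₁ h₂ (con_ker_eq_of_loopProblem_eq h)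
end

section
/- Let σ : X* → M be a surjective monoid homomorphism onto a monoid M. If a word w ∈ (X ∪ X̄)* belongs to the loop problem L_σ(M), then w labels a loop at every vertex of the loop automaton Γ̂_σ(M). -/
open FreeMonoid

lemma LStep.mul_left {X M : Type*} [Monoid M] {σ : FreeMonoid X →* M} {a b : M}
    {l : X ⊕ X} (h : LStep σ a l b) (m : M) : LStep σ (m * a) l (m * b) := by
  cases h <;> rw [← mul_assoc] <;> constructor

lemma LPath.mul_left {X M : Type*} [Monoid M] {σ : FreeMonoid X →* M} {a b : M}
    {w : List (X ⊕ X)} (h : LPath σ a w b) (m : M) : LPath σ (m * a) w (m * b) := by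
  induction h with
  | nil c => exact LPath.nil (m * c)
  | cons h₁ _ ih => exact LPath.cons (h₁.mul_left m) ih

theorem loops_at_every_vertex {X M : Type*} [Monoid M] (σ : FreeMonoid X →* M)
    (hσ : Function.Surjective σ) (w : List (X ⊕ X)) (hw : w ∈ LoopProblem σ) :
    ∀ m : M, LPath σ m w m := by
  intro m
  simpa using hw.mul_left m
end

section
/- Let σ : X* → M and τ : Y* → M be finite choices of generators for a monoid M. Then there exists a monoid homomorphism ρ : (Y ∪ Ȳ)* → (X ∪ X̄)* commuting with the involutions such that L_τ(M) = ρ⁻¹(L_σ(M)), i.e., the loop problem with respect to τ is an inverse morphic image of the loop problem with respect to σ. -/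
open FreeMonoid

/-- The bar involution, as a map on the free monoid over X ⊕ X. -/
def barF {X : Type*} (w : FreeMonoid (X ⊕ X)) : FreeMonoid (X ⊕ X) :=
  FreeMonoid.ofList (barW (FreeMonoid.toList w))

/-!
Pick for every generator `y` a `σ`-word `g y` with `σ (g y) = τ y` and let `ρ` substitute `g y` for
`y` and its bar for `ȳ`. In the loop automaton of `σ` the path labelled `g y` leads from `m` exactly
to `m * τ y`, and the path labelled the bar of `g y` leads backwards, so `ρ` maps the paths of the
`τ`-automaton onto paths of the `σ`-automaton with the same endpoints. It commutes with the bars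
because it does so on letters and both bars reverse words.
-/

section LoopPaths

variable {X M : Type*} [Monoid M] {σ : FreeMonoid X →* M}

theorem lStep_inl_iff {a b : M} {x : X} : LStep σ a (Sum.inl x) b ↔ b = a * σ (of x) := by
  constructor
  · rintro ⟨⟩; rfl
  · rintro rfl; exact .posW a x

theorem lStep_inr_iff {a b : M} {x : X} : LStep σ a (Sum.inr x) b ↔ a = b * σ (of x) := by
  constructor
  · rintro ⟨⟩; rfl
  · rintro rfl; exact .negW b x

namespace LPath

theorem nil_iff_s5 {a b : M} : LPath σ a [] b ↔ a = b := by
  constructor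
  · rintro ⟨⟩; rfl
  · rintro rfl; exact .nil a

theorem cons_iff {a c : M} {l : X ⊕ X} {w : List (X ⊕ X)} :
    LPath σ a (l :: w) c ↔ ∃ b, LStep σ a l b ∧ LPath σ b w c := by
  constructor
  · rintro ⟨⟩; exact ⟨_, ‹_›, ‹_›⟩
  · rintro ⟨b, hstep, hpath⟩; exact .cons hstep hpath

theorem append_iff_s5 {u v : List (X ⊕ X)} {a c : M} :
    LPath σ a (u ++ v) c ↔ ∃ b, LPath σ a u b ∧ LPath σ b v c := by
  induction u generalizing a with
  | nil => simp [nil_iff_s5]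
  | cons l u ih => simp only [List.cons_append, cons_iff, ih]; aesop

theorem posW_iff_s5 {u : List X} {a b : M} :
    LPath σ a (posW u) b ↔ b = a * σ (ofList u) := by
  induction u generalizing a with
  | nil => simp [posW, nil_iff_s5, eq_comm]
  | cons x u ih =>
    simp only [posW, List.map_cons, cons_iff, lStep_inl_iff] at ih ⊢
    simp [ih, ofList_cons, mul_assoc]

theorem negW_iff_s5 {u : List X} {a b : M} :
    LPath σ a (negW u) b ↔ a = b * σ (ofList u) := by
  induction u generalizing a b with
  | nil => simp [negW, nil_iff_s5]
  | cons x u ih =>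
    have hsplit : negW (x :: u) = negW u ++ [Sum.inr x] := by simp [negW]
    simp [hsplit, append_iff_s5, cons_iff, nil_iff_s5, lStep_inr_iff, ih, ofList_cons, mul_assoc]

theorem flatMap_iff {Y : Type*} {τ : FreeMonoid Y →* M} {f : Y ⊕ Y → List (X ⊕ X)}
    (hf : ∀ l a b, LStep τ a l b ↔ LPath σ a (f l) b) {w : List (Y ⊕ Y)} {a b : M} :
    LPath τ a w b ↔ LPath σ a (w.flatMap f) b := by
  induction w generalizing a with
  | nil => simp [nil_iff_s5]
  | cons l w ih => simp [cons_iff, append_iff_s5, hf, ih]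

end LPath

end LoopPaths

section Bar

variable {X : Type*}

theorem barW_cons (l : X ⊕ X) (w : List (X ⊕ X)) : barW (l :: w) = barW w ++ [l.swap] := by
  simp [barW]

theorem barW_append (u v : List (X ⊕ X)) : barW (u ++ v) = barW v ++ barW u := by
  simp [barW]

theorem barW_posW (u : List X) : barW (posW u) = negW u := by
  simp [barW, posW, negW, Function.comp_def]

theorem barW_negW (u : List X) : barW (negW u) = posW u := by
  simp [barW, posW, negW, Function.comp_def]

theorem barW_flatMap {Y : Type*} {f : Y ⊕ Y → List (X ⊕ X)} (hf : ∀ l, f l.swap = barW (f l))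
    (w : List (Y ⊕ Y)) : barW (w.flatMap f) = (barW w).flatMap f := by
  induction w with
  | nil => rfl
  | cons l w ih => simp [barW_append, barW_cons, ih, hf]

end Bar

def signedImage {X Y : Type*} (g : Y → List X) : Y ⊕ Y → List (X ⊕ X) :=
  Sum.elim (fun y => posW (g y)) (fun y => negW (g y))

section SignedImage

variable {X Y M : Type*} [Monoid M] (g : Y → List X)

theorem signedImage_swap (l : Y ⊕ Y) : signedImage g l.swap = barW (signedImage g l) := by
  cases l <;> simp [signedImage, barW_posW, barW_negW]

theorem lStep_iff_lPath_signedImage {σ : FreeMonoid X →* M} {τ : FreeMonoid Y →* M}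
    (hg : ∀ y, σ (ofList (g y)) = τ (of y)) (l : Y ⊕ Y) (a b : M) :
    LStep τ a l b ↔ LPath σ a (signedImage g l) b := by
  cases l <;> simp [signedImage, lStep_inl_iff, lStep_inr_iff, LPath.posW_iff_s5, LPath.negW_iff_s5, hg]

end SignedImage

theorem FreeMonoid.toList_lift_ofList {α β : Type*} (f : α → List β) (w : FreeMonoid α) :
    toList (lift (fun a => ofList (f a)) w) = (toList w).flatMap f := by
  simp [lift_apply, toList_prod, List.flatMap_def, Function.comp_def]

theorem loop_problem_inverse_morphic_image_general {X Y M : Type*} [Monoid M]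
    (σ : FreeMonoid X →* M) (τ : FreeMonoid Y →* M)
    (hσ : Function.Surjective σ) :
    ∃ ρ : FreeMonoid (Y ⊕ Y) →* FreeMonoid (X ⊕ X),
      (∀ w : FreeMonoid (Y ⊕ Y), ρ (barF w) = barF (ρ w)) ∧
      ∀ w : List (Y ⊕ Y), w ∈ LoopProblem τ ↔
        FreeMonoid.toList (ρ (FreeMonoid.ofList w)) ∈ LoopProblem σ := by
  choose g hg using fun y => hσ (τ (of y))
  refine ⟨lift fun l => ofList (signedImage (fun y => toList (g y)) l), fun w => ?_, fun w => ?_⟩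
  · apply toList.injective
    simp only [barF, toList_ofList, toList_lift_ofList]
    exact (barW_flatMap (signedImage_swap _) _).symm
  · rw [toList_lift_ofList]
    exact LPath.flatMap_iff (lStep_iff_lPath_signedImage _ hg)

theorem loop_problem_inverse_morphic_image {X Y M : Type*} [Finite X] [Finite Y] [Monoid M]
    (σ : FreeMonoid X →* M) (τ : FreeMonoid Y →* M)
    (hσ : Function.Surjective σ) (hτ : Function.Surjective τ) :
    ∃ ρ : FreeMonoid (Y ⊕ Y) →* FreeMonoid (X ⊕ X),
      (∀ w : FreeMonoid (Y ⊕ Y), ρ (barF w) = barF (ρ w)) ∧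
      ∀ w : List (Y ⊕ Y), w ∈ LoopProblem τ ↔
        FreeMonoid.toList (ρ (FreeMonoid.ofList w)) ∈ LoopProblem σ :=
  loop_problem_inverse_morphic_image_general σ τ hσ
end

section
/- Let G be a group, I and J sets, and P a J × I matrix over G. Let H be the maximal subgroup {(i, g, j) : g ∈ G} of the Rees matrix semigroup S = M(G; I, J; P) for fixed i ∈ I, j ∈ J. If a ∈ S¹ and x, y ∈ H are such that ax ∈ H, then there exists b ∈ H with bx = ax and by = ay. -/
/-- The Rees matrix semigroup `M(G; I, J; P)`. -/
structure ReesMatrix (G I J : Type*) (P : J → I → G) where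
  i : I
  g : G
  j : J

namespace ReesMatrix

variable {G I J : Type*} [Group G] {P : J → I → G}

instance : Mul (ReesMatrix G I J P) :=
  ⟨fun a b => ⟨a.i, a.g * P a.j b.i * b.g, b.j⟩⟩

theorem mul_def (a b : ReesMatrix G I J P) :
    a * b = ⟨a.i, a.g * P a.j b.i * b.g, b.j⟩ := rfl

instance : Semigroup (ReesMatrix G I J P) where
  mul_assoc a b c := by
    simp only [mul_def, mk.injEq, mul_assoc]

end ReesMatrix

theorem rees_maximal_subgroup_property {G I J : Type*} [Group G] (P : J → I → G)
    (i : I) (j : J) (a : WithOne (ReesMatrix G I J P)) (gx gy : G)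
    (hax : ∃ g : G, a * (↑(⟨i, gx, j⟩ : ReesMatrix G I J P) : WithOne (ReesMatrix G I J P)) =
      ↑(⟨i, g, j⟩ : ReesMatrix G I J P)) :
    ∃ gb : G,
      (↑(⟨i, gb, j⟩ : ReesMatrix G I J P) : WithOne (ReesMatrix G I J P)) *
          ↑(⟨i, gx, j⟩ : ReesMatrix G I J P) = a * ↑(⟨i, gx, j⟩ : ReesMatrix G I J P) ∧
      (↑(⟨i, gb, j⟩ : ReesMatrix G I J P) : WithOne (ReesMatrix G I J P)) *
          ↑(⟨i, gy, j⟩ : ReesMatrix G I J P) = a * ↑(⟨i, gy, j⟩ : ReesMatrix G I J P) := by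
  revert hax
  refine WithOne.cases_on a (fun hax => ?_) (fun s hax => ?_)
  ·
    refine ⟨(P j i)⁻¹, ?_, ?_⟩ <;>
      simp [← WithOne.coe_mul, ReesMatrix.mul_def]
  ·
    obtain ⟨g, hg⟩ := hax
    rw [← WithOne.coe_mul, WithOne.coe_inj, ReesMatrix.mul_def] at hg
    obtain ⟨ki, -, -⟩ := ReesMatrix.mk.injEq .. ▸ hg
    refine ⟨s.g * P s.j i * (P j i)⁻¹, ?_, ?_⟩ <;>
      · rw [← WithOne.coe_mul, ← WithOne.coe_mul, WithOne.coe_inj,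
          ReesMatrix.mul_def, ReesMatrix.mul_def]
        simp [ki, mul_assoc]
end

section
/- Let G be a maximal subgroup of a completely simple semigroup S, σ : X⁺ → G a choice of semigroup generators for G, and τ : Y⁺ → S a choice of generators for S with X ⊆ Y and σ the restriction of τ. Then L_σ(G) = L_τ(S) ∩ (X ∪ X̄)*. -/
open FreeMonoid

/-- A subsemigroup is a subgroup if it contains an identity for itself and inverses. -/
def IsSubgroupOf {S : Type*} [Semigroup S] (H : Subsemigroup S) : Prop :=
  ∃ e ∈ H, (∀ h ∈ H, e * h = h ∧ h * e = h) ∧ ∀ h ∈ H, ∃ h' ∈ H, h * h' = e ∧ h' * h = e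

/-- A maximal subgroup: a subgroup contained in no strictly larger subgroup. -/
def IsMaximalSubgroup {S : Type*} [Semigroup S] (H : Subsemigroup S) : Prop :=
  IsSubgroupOf H ∧ ∀ K : Subsemigroup S, IsSubgroupOf K → H ≤ K → H = K

/-- A semigroup is completely simple if it has a primitive idempotent and no
proper (two-sided) ideals. -/
def IsCompletelySimple (S : Type*) [Semigroup S] : Prop :=
  (∃ e : S, e * e = e ∧ ∀ f : S, f * f = f → e * f = f → f * e = f → f = e) ∧
  ∀ I : Set S, I.Nonempty → (∀ a ∈ I, ∀ s : S, a * s ∈ I ∧ s * a ∈ I) → I = Set.univ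

/-!
A path in the Cayley graph of `S¹` labelled by generators of the subgroup `H` need not stay
inside `H¹`, but it can be pushed back there: with `e` the identity of `H`, the map `1 ↦ 1`,
`s ↦ s e` commutes with right multiplication by elements of `H`, and whenever it sends the end
of an edge into `H¹` it sends the start there too, because the label of the edge is invertible
in `H`. A loop at `1` in `S¹` is therefore carried to a loop at `1` in `H¹`; the converse
direction only needs the embedding `H¹ → S¹`.
-/

section Transfer

variable {X Y M N : Type*} [Monoid M] [Monoid N] {σ : FreeMonoid X →* M}
  {τ : FreeMonoid Y →* N} {π : X → Y} {ι : M →* N}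

theorem LPath.map (hcomm : ∀ x, ι (σ (of x)) = τ (of (π x))) {a b : M} {w : List (X ⊕ X)}
    (h : LPath σ a w b) : LPath τ (ι a) (w.map (Sum.map π π)) (ι b) := by
  induction h with
  | nil a => exact LPath.nil _
  | cons step _ ih =>
    refine LPath.cons ?_ ih
    cases step with
    | posW a x => rw [map_mul, hcomm]; exact LStep.posW _ _
    | negW a x => rw [map_mul, hcomm]; exact LStep.negW _ _

variable (hι : Function.Injective ι) (hcomm : ∀ x, ι (σ (of x)) = τ (of (π x)))
  {φ : N → N}
  (hφ_mul : ∀ a x, φ (a * τ (of (π x))) = φ a * τ (of (π x)))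
  (hφ_range : ∀ a x, φ a * τ (of (π x)) ∈ Set.range ι → φ a ∈ Set.range ι)
include hι hcomm hφ_mul hφ_range

theorem LStep.lift {a b : N} {l : X ⊕ X} (h : LStep τ a (Sum.map π π l) b) {m : M}
    (hm : ι m = φ a) : ∃ m', ι m' = φ b ∧ LStep σ m l m' := by
  cases l with
  | inl x =>
    cases h
    refine ⟨m * σ (of x), ?_, LStep.posW m x⟩
    rw [map_mul, hm, hcomm, hφ_mul]
  | inr x =>
    cases h with
    | negW =>
      obtain ⟨m', hm'⟩ := hφ_range b x ⟨m, by rw [hm, hφ_mul]⟩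
      have : m = m' * σ (of x) := hι <| by rw [hm, hφ_mul, map_mul, hm', hcomm]
      exact ⟨m', hm', this ▸ LStep.negW m' x⟩

theorem LPath.lift {a b : N} {w : List (X ⊕ X)} (h : LPath τ a (w.map (Sum.map π π)) b)
    {m : M} (hm : ι m = φ a) : ∃ m', ι m' = φ b ∧ LPath σ m w m' := by
  induction w generalizing a m with
  | nil => cases h; exact ⟨m, hm, LPath.nil m⟩
  | cons l w ih =>
    cases h with
    | cons step rest =>
      obtain ⟨m₁, hm₁, step'⟩ := step.lift hι hcomm hφ_mul hφ_range hm
      obtain ⟨m', hm', rest'⟩ := ih rest hm₁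
      exact ⟨m', hm', LPath.cons step' rest'⟩

theorem mem_loopProblem_iff_map_mem (hφ_one : φ 1 = 1) (w : List (X ⊕ X)) :
    w ∈ LoopProblem σ ↔ w.map (Sum.map π π) ∈ LoopProblem τ := by
  refine ⟨fun h => ?_, fun h => ?_⟩
  · show LPath τ 1 _ 1
    simpa only [map_one] using h.map hcomm
  obtain ⟨m, hm, path⟩ := h.lift hι hcomm hφ_mul hφ_range (m := 1) (by rw [map_one, hφ_one])
  obtain rfl : m = 1 := hι <| by rw [hm, hφ_one, map_one]
  exact path

end Transfer

section Subgroup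

variable {S : Type*} [Semigroup S] {e h : S}

theorem WithOne.map_mul_right_mul_coe (heh : e * h = h) (hhe : h * e = h) (a : WithOne S) :
    WithOne.map (· * e) (a * h) = WithOne.map (· * e) a * h := by
  induction a using WithOne.recOneCoe with
  | one => simp [hhe]
  | coe s =>
    simp only [← WithOne.coe_mul, WithOne.map_coe, mul_assoc, heh, hhe]

theorem WithOne.map_mul_right_mem_range_of_mul_coe {H : Subsemigroup S} {h' : S}
    (heh : e * h = h) (hh' : h' ∈ H) (hhh' : h * h' = e) (a : WithOne S)
    (ha : WithOne.map (· * e) a * h ∈ Set.range (WithOne.mapMulHom (MulMemClass.subtype H))) :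
    WithOne.map (· * e) a ∈ Set.range (WithOne.mapMulHom (MulMemClass.subtype H)) := by
  induction a using WithOne.recOneCoe with
  | one => exact ⟨1, map_one _⟩
  | coe s =>
    obtain ⟨k, hk⟩ := ha
    induction k using WithOne.recOneCoe with
    | one => exact absurd hk.symm (by simp [← WithOne.coe_mul])
    | coe k =>
      have hk : (k : S) = s * e * h := by simpa [← WithOne.coe_mul] using hk
      have hse : s * e = k * h' := by rw [hk, mul_assoc s e h, heh, mul_assoc, hhh']
      exact ⟨((⟨s * e, hse ▸ H.mul_mem k.2 hh'⟩ : H) : WithOne H), rfl⟩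

theorem IsSubgroupOf.mem_sLoopProblem_iff {H : Subsemigroup S} (hH : IsSubgroupOf H)
    {X Y : Type*} (g : X → H) (f : Y → S) (π : X → Y) (hg : ∀ x, (g x : S) = f (π x))
    (w : List (X ⊕ X)) :
    w ∈ SLoopProblem g ↔ w.map (Sum.map π π) ∈ SLoopProblem f := by
  obtain ⟨e, -, he, hinv⟩ := hH
  have hgen : ∀ x, (FreeMonoid.lift fun y => (f y : WithOne S)) (of (π x)) = (g x : S) :=
    fun x => by rw [lift_eval_of, hg]
  refine mem_loopProblem_iff_map_mem (φ := WithOne.map (· * e))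
    (WithOne.mapMulHom_injective (f := MulMemClass.subtype H) Subtype.val_injective)
    (fun x => by rw [lift_eval_of, hgen, WithOne.mapMulHom_coe]; rfl)
    (fun a x => ?_) (fun a x => ?_) rfl w
  · rw [hgen]
    exact WithOne.map_mul_right_mul_coe (he _ (g x).2).1 (he _ (g x).2).2 a
  · obtain ⟨g', hg', hgg', -⟩ := hinv _ (g x).2
    rw [hgen]
    exact WithOne.map_mul_right_mem_range_of_mul_coe (he _ (g x).2).1 hg' hgg' a

end Subgroup

theorem cs_loop_problem_restricts_to_subgroup_general {Y S : Type*} [Semigroup S]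
    (H : Subsemigroup S) (hH : IsMaximalSubgroup H)
    (X : Set Y) (f : Y → S)
    (g : X → H) (hg : ∀ x : X, (g x : S) = f x) :
    ∀ w : List ((X : Type _) ⊕ (X : Type _)),
      w ∈ SLoopProblem g ↔
        w.map (Sum.map (Subtype.val : X → Y) (Subtype.val : X → Y)) ∈ SLoopProblem f :=
  hH.1.mem_sLoopProblem_iff g f Subtype.val hg

theorem cs_loop_problem_restricts_to_subgroup {Y S : Type*} [Semigroup S]
    (hS : IsCompletelySimple S) (H : Subsemigroup S) (hH : IsMaximalSubgroup H)
    (X : Set Y) (f : Y → S)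
    (hfS : ∀ s : S, ∃ w : List Y, w ≠ [] ∧
      FreeMonoid.lift (fun y => (f y : WithOne S)) (FreeMonoid.ofList w) = ↑s)
    (hrange : ∀ x : X, f x ∈ H)
    (g : X → H) (hg : ∀ x : X, (g x : S) = f x)
    (hgG : ∀ h : H, ∃ w : List X, w ≠ [] ∧
      FreeMonoid.lift (fun x => ((g x : H) : WithOne H)) (FreeMonoid.ofList w) = ↑h) :
    ∀ w : List ((X : Type _) ⊕ (X : Type _)),
      w ∈ SLoopProblem g ↔
        w.map (Sum.map (Subtype.val : X → Y) (Subtype.val : X → Y)) ∈ SLoopProblem f :=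
  cs_loop_problem_restricts_to_subgroup_general H hH X f g hg
end

section
/- Let M be a right cancellative monoid with choice of generators τ : X* → M. Then the syntactic monoid of the loop problem L_τ(M) is isomorphic to the inverse hull of M, i.e., the monoid of partial bijections of M generated by the right translations ρ_m : x ↦ xm and their relational inverses. -/
open FreeMonoid

/-- The syntactic congruence of a language `L`. -/
def syntacticCon {A : Type*} (L : Set (List A)) : Con (FreeMonoid A) where
  r u v := ∀ x y : List A,
    x ++ FreeMonoid.toList u ++ y ∈ L ↔ x ++ FreeMonoid.toList v ++ y ∈ L
  iseqv := ⟨fun _ _ _ => Iff.rfl, fun h x y => (h x y).symm,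
    fun h1 h2 x y => (h1 x y).trans (h2 x y)⟩
  mul' := by
    intro a b c d h1 h2 x y
    simp only [FreeMonoid.toList_mul]
    calc x ++ (FreeMonoid.toList a ++ FreeMonoid.toList c) ++ y ∈ L
        ↔ x ++ FreeMonoid.toList a ++ (FreeMonoid.toList c ++ y) ∈ L := by
          simp only [List.append_assoc]
      _ ↔ x ++ FreeMonoid.toList b ++ (FreeMonoid.toList c ++ y) ∈ L := h1 _ _
      _ ↔ (x ++ FreeMonoid.toList b) ++ FreeMonoid.toList c ++ y ∈ L := by
          simp only [List.append_assoc]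
      _ ↔ (x ++ FreeMonoid.toList b) ++ FreeMonoid.toList d ++ y ∈ L := h2 _ _
      _ ↔ x ++ (FreeMonoid.toList b ++ FreeMonoid.toList d) ++ y ∈ L := by
          simp only [List.append_assoc]

/-- Partial maps on `M`. -/
def PMap (M : Type*) := M → Option M

instance {M : Type*} : Monoid (PMap M) where
  one := fun m => some m
  mul f g := fun m => (f m).bind g
  mul_assoc f g h := by
    funext m
    show ((f m).bind g).bind h = (f m).bind (fun x => (g x).bind h)
    cases f m <;> rfl
  one_mul f := by funext m; rfl
  mul_one f := by
    funext m
    show (f m).bind some = f m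
    cases f m <;> rfl

/-- Right translation by `m`, as a partial map. -/
def rho {M : Type*} [Monoid M] (m : M) : PMap M := fun x => some (x * m)

open Classical in
/-- The relational inverse of the right translation by `m`. -/
noncomputable def rhoInv {M : Type*} [Monoid M] (m : M) : PMap M :=
  fun y => if h : ∃ x : M, x * m = y then some h.choose else none

/-- The inverse hull of a (right cancellative) monoid `M`: the submonoid of the
monoid of partial maps of `M` generated by the right translations and their
relational inverses. -/
noncomputable def inverseHull (M : Type*) [Monoid M] : Submonoid (PMap M) :=
  Submonoid.closure (Set.range (rho (M := M)) ∪ Set.range (rhoInv (M := M)))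

/-!
Reading `x` as the right translation `ρ_{τ x}` and `x̄` as its relational inverse turns words into
partial maps of `M`, multiplicatively, and a word labels a loop at `1` exactly when its partial
map sends `1` to `1`. As `τ` is onto and `m ↦ ρ_m` is a morphism (and `m ↦ ρ_m⁻¹` an
antimorphism), the image of this morphism is the inverse hull. Every `m` is reached from `1` by
a positive word, and `1` is reached from `k`, and only from `k`, by a negative word; composing
with them detects every transition `m ↦ k` of a partial map, so two words are syntactically
equivalent exactly when they induce the same partial map.
-/

namespace PMap

variable {M : Type*}

theorem mul_apply (f g : PMap M) (a : M) : (f * g) a = (f a).bind fun b => g b := rfl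

theorem one_apply (a : M) : (1 : PMap M) a = some a := rfl

theorem ext_some {f g : PMap M} (h : ∀ a b, f a = some b ↔ g a = some b) : f = g :=
  funext fun a => Option.ext (h a)

end PMap

section Translations

variable {M : Type*} [Monoid M]

theorem rho_one : rho (1 : M) = 1 :=
  funext fun x => congrArg some (mul_one x)

theorem rho_mul (m n : M) : rho (m * n) = rho m * rho n :=
  funext fun x => congrArg some (mul_assoc x m n).symm

variable [IsRightCancelMul M]

theorem rhoInv_eq_some_iff {m y x : M} : rhoInv m y = some x ↔ x * m = y := by
  unfold rhoInv
  split_ifs with h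
  · rw [Option.some_inj]
    exact ⟨fun hx => hx ▸ h.choose_spec, fun hx => mul_right_cancel (h.choose_spec.trans hx.symm)⟩
  · exact ⟨nofun, fun hx => absurd ⟨x, hx⟩ h⟩

theorem rhoInv_one : rhoInv (1 : M) = 1 :=
  PMap.ext_some fun y x => by rw [rhoInv_eq_some_iff, mul_one, PMap.one_apply, Option.some_inj, eq_comm]

theorem rhoInv_mul (m n : M) : rhoInv (m * n) = rhoInv n * rhoInv m :=
  PMap.ext_some fun y x => by
    simp only [PMap.mul_apply, Option.bind_eq_some_iff, rhoInv_eq_some_iff]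
    exact ⟨fun h => ⟨x * m, by rw [mul_assoc, h], rfl⟩, fun ⟨z, hz, hx⟩ => by rw [← mul_assoc, hx, hz]⟩

end Translations

section Syntactic

variable {A M : Type*} {L : Set (List A)} {φ : FreeMonoid A →* PMap M} {o : M}

theorem ker_le_syntacticCon (hL : ∀ w, w ∈ L ↔ φ (ofList w) o = some o) :
    Con.ker φ ≤ syntacticCon L := by
  intro u v h x y
  simp only [hL, ofList_append, ofList_toList, map_mul, (Con.ker_rel φ).1 h]

theorem apply_eq_some_of_syntacticCon (hL : ∀ w, w ∈ L ↔ φ (ofList w) o = some o)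
    (hreach : ∀ m, ∃ a, φ a o = some m) (hreturn : ∀ k, ∃ b, ∀ y, φ b y = some o ↔ y = k)
    {u v : FreeMonoid A} (h : syntacticCon L u v) {m k : M} (hk : φ u m = some k) :
    φ v m = some k := by
  obtain ⟨a, ha⟩ := hreach m
  obtain ⟨b, hb⟩ := hreturn k
  have hloop : ∀ w, toList a ++ toList w ++ toList b ∈ L ↔ (φ w m).bind (fun y => φ b y) = some o := by
    intro w
    rw [hL, ofList_append, ofList_append, ofList_toList, ofList_toList, ofList_toList, map_mul,
      map_mul, PMap.mul_apply, PMap.mul_apply, ha, Option.bind_some]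
  have hv := (hloop v).1 ((h _ _).1 ((hloop u).2 (by rw [hk, Option.bind_some, hb])))
  obtain ⟨y, hy, hyo⟩ := Option.bind_eq_some_iff.1 hv
  rw [hy, (hb y).1 hyo]

theorem syntacticCon_eq_ker (hL : ∀ w, w ∈ L ↔ φ (ofList w) o = some o)
    (hreach : ∀ m, ∃ a, φ a o = some m) (hreturn : ∀ k, ∃ b, ∀ y, φ b y = some o ↔ y = k) :
    syntacticCon L = Con.ker φ :=
  le_antisymm
    (fun _ _ h => (Con.ker_rel φ).2 <| PMap.ext_some fun _ _ =>
      ⟨apply_eq_some_of_syntacticCon hL hreach hreturn h,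
        apply_eq_some_of_syntacticCon hL hreach hreturn ((syntacticCon L).symm h)⟩)
    (ker_le_syntacticCon hL)

end Syntactic

section LoopAction

variable {X M : Type*} [Monoid M] (τ : FreeMonoid X →* M)

noncomputable def letterAction : X ⊕ X → PMap M :=
  Sum.elim (fun x => rho (τ (of x))) (fun x => rhoInv (τ (of x)))

noncomputable def loopAction : FreeMonoid (X ⊕ X) →* PMap M :=
  FreeMonoid.lift (letterAction τ)

theorem loopAction_ofList_cons (l : X ⊕ X) (w : List (X ⊕ X)) :
    loopAction τ (ofList (l :: w)) = letterAction τ l * loopAction τ (ofList w) := by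
  rw [ofList_cons, map_mul, loopAction, lift_eval_of]

theorem loopAction_posW (p : List X) : loopAction τ (ofList (posW p)) = rho (τ (ofList p)) := by
  induction p with
  | nil => exact (map_one _).trans (by rw [ofList_nil, map_one, rho_one])
  | cons x p ih =>
    rw [posW, List.map_cons, loopAction_ofList_cons, ← posW, ih, ofList_cons, map_mul, rho_mul]
    rfl

theorem mrange_loopAction_le : MonoidHom.mrange (loopAction τ) ≤ inverseHull M := by
  rw [loopAction, FreeMonoid.mrange_lift]
  refine Submonoid.closure_mono (Set.range_subset_iff.2 ?_)
  rintro (x | x)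
  exacts [Or.inl ⟨_, rfl⟩, Or.inr ⟨_, rfl⟩]

theorem rho_mem_mrange_loopAction (hτ : Function.Surjective τ) (m : M) :
    rho m ∈ MonoidHom.mrange (loopAction τ) := by
  obtain ⟨p, rfl⟩ := hτ m
  exact ⟨_, loopAction_posW τ (toList p)⟩

variable [IsRightCancelMul M]

theorem loopAction_negW (p : List X) :
    loopAction τ (ofList (negW p)) = rhoInv (τ (ofList p)) := by
  induction p with
  | nil => exact (map_one _).trans (by rw [ofList_nil, map_one, rhoInv_one])
  | cons x p ih =>
    have hnegW : negW (x :: p) = negW p ++ [Sum.inr x] := by simp [negW]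
    rw [hnegW, ofList_append, map_mul, ih, ofList_singleton, loopAction, lift_eval_of,
      ofList_cons, map_mul, rhoInv_mul]
    rfl

theorem lStep_iff {a b : M} {l : X ⊕ X} : LStep τ a l b ↔ letterAction τ l a = some b := by
  cases l with
  | inl x =>
    refine ⟨fun h => by cases h; rfl, fun h => ?_⟩
    cases Option.some_inj.1 h
    exact LStep.posW a x
  | inr x =>
    refine ⟨fun h => by cases h; exact rhoInv_eq_some_iff.2 rfl, fun h => ?_⟩
    cases rhoInv_eq_some_iff.1 h
    exact LStep.negW b x

theorem lPath_iff {a c : M} {w : List (X ⊕ X)} :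
    LPath τ a w c ↔ loopAction τ (ofList w) a = some c := by
  induction w generalizing a with
  | nil =>
    refine ⟨fun h => by cases h; rfl, fun h => ?_⟩
    cases Option.some_inj.1 h
    exact LPath.nil _
  | cons l w ih =>
    rw [loopAction_ofList_cons, PMap.mul_apply, Option.bind_eq_some_iff]
    constructor
    · rintro (_ | ⟨hstep, hpath⟩)
      exact ⟨_, (lStep_iff τ).1 hstep, ih.1 hpath⟩
    · rintro ⟨b, hstep, hpath⟩
      exact LPath.cons ((lStep_iff τ).2 hstep) (ih.2 hpath)

theorem mem_loopProblem_iff {w : List (X ⊕ X)} :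
    w ∈ LoopProblem τ ↔ loopAction τ (ofList w) 1 = some 1 :=
  lPath_iff τ

theorem rhoInv_mem_mrange_loopAction (hτ : Function.Surjective τ) (m : M) :
    rhoInv m ∈ MonoidHom.mrange (loopAction τ) := by
  obtain ⟨p, rfl⟩ := hτ m
  exact ⟨_, loopAction_negW τ (toList p)⟩

theorem mrange_loopAction (hτ : Function.Surjective τ) :
    MonoidHom.mrange (loopAction τ) = inverseHull M :=
  le_antisymm (mrange_loopAction_le τ) <| Submonoid.closure_le.2 <| Set.union_subset
    (Set.range_subset_iff.2 (rho_mem_mrange_loopAction τ hτ))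
    (Set.range_subset_iff.2 (rhoInv_mem_mrange_loopAction τ hτ))

theorem syntacticCon_loopProblem (hτ : Function.Surjective τ) :
    syntacticCon (LoopProblem τ) = Con.ker (loopAction τ) :=
  syntacticCon_eq_ker (fun _ => mem_loopProblem_iff τ)
    (fun m => (rho_mem_mrange_loopAction τ hτ m).imp fun _ ha => by rw [ha, rho, one_mul])
    (fun k => (rhoInv_mem_mrange_loopAction τ hτ k).imp fun _ hb y => by
      rw [hb, rhoInv_eq_some_iff, one_mul, eq_comm])

end LoopAction

theorem syntactic_monoid_is_inverse_hull {X M : Type*} [Monoid M] [IsRightCancelMul M]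
    (τ : FreeMonoid X →* M) (hτ : Function.Surjective τ) :
    Nonempty ((syntacticCon (LoopProblem τ)).Quotient ≃* (inverseHull M)) := by
  rw [syntacticCon_loopProblem τ hτ, ← mrange_loopAction τ hτ]
  exact ⟨Con.quotientKerEquivRange (loopAction τ)⟩
end

section
/- Let M be a right cancellative monoid with choice of generators σ : X* → M. Then the loop problem L_σ(M) is exactly the set of words over X ∪ X̄ representing the identity in the inverse hull of M, under the homomorphism sending x to the right translation ρ_{σ(x)} and x̄ to its relational inverse ρ_{σ(x)}⁻¹. -/
open FreeMonoid

section AuxProof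

variable {X M : Type*} [Monoid M] [IsRightCancelMul M]

lemma rhoInv_eq_some {m y b : M} : rhoInv m y = some b ↔ b * m = y := by
  classical
  unfold rhoInv
  split_ifs with h
  · simp only [Option.some_inj]
    constructor
    · rintro rfl; exact h.choose_spec
    · intro hb; exact mul_right_cancel (h.choose_spec.trans hb.symm)
  · constructor
    · intro hc; cases hc
    · intro hb; exact absurd ⟨b, hb⟩ h

variable (σ : FreeMonoid X →* M)

noncomputable def elimMap : X ⊕ X → PMap M :=
  Sum.elim (fun x : X => rho (σ (FreeMonoid.of x)))
    (fun x : X => rhoInv (σ (FreeMonoid.of x)))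

noncomputable def Ew (w : List (X ⊕ X)) : PMap M :=
  FreeMonoid.lift (elimMap σ) (FreeMonoid.ofList w)

lemma lstep_iff {a b : M} {l : X ⊕ X} :
    LStep σ a l b ↔ elimMap σ l a = some b := by
  cases l with
  | inl x =>
    show LStep σ a (Sum.inl x) b ↔ rho (σ (FreeMonoid.of x)) a = some b
    unfold rho
    simp only [Option.some_inj]
    constructor
    · rintro ⟨⟩; rfl
    · rintro rfl; exact LStep.posW a x
  | inr x =>
    show LStep σ a (Sum.inr x) b ↔ rhoInv (σ (FreeMonoid.of x)) a = some b
    rw [rhoInv_eq_some]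
    constructor
    · rintro ⟨⟩; rfl
    · rintro rfl; exact LStep.negW b x

lemma Ew_nil : Ew σ ([] : List (X ⊕ X)) = 1 := by
  show FreeMonoid.lift (elimMap σ) 1 = 1
  exact map_one _

lemma Ew_cons (l : X ⊕ X) (w : List (X ⊕ X)) (a : M) :
    Ew σ (l :: w) a = (elimMap σ l a).bind (Ew σ w) := by
  show FreeMonoid.lift (elimMap σ) (FreeMonoid.ofList (l :: w)) a = _
  have : FreeMonoid.ofList (l :: w) = FreeMonoid.of l * FreeMonoid.ofList w := rfl
  rw [this, map_mul, FreeMonoid.lift_eval_of]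
  rfl

lemma lpath_iff : ∀ (w : List (X ⊕ X)) (a c : M),
    LPath σ a w c ↔ Ew σ w a = some c := by
  intro w
  induction w with
  | nil =>
    intro a c
    rw [Ew_nil]
    show _ ↔ some a = some c
    simp only [Option.some_inj]
    constructor
    · rintro ⟨⟩; rfl
    · rintro rfl; exact LPath.nil a
  | cons l w ih =>
    intro a c
    rw [Ew_cons]
    constructor
    · intro h
      cases h with
      | cons h₁ h₂ =>
        rw [(lstep_iff σ).mp h₁]
        exact (ih _ _).mp h₂
    · intro h
      rcases hb : elimMap σ l a with _ | b
      · rw [hb] at h; cases h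
      · rw [hb] at h
        exact LPath.cons ((lstep_iff σ).mpr hb) ((ih _ _).mpr h)

lemma lstep_translate {a b : M} {l : X ⊕ X} (m : M) (h : LStep σ a l b) :
    LStep σ (m * a) l (m * b) := by
  cases h <;> rw [← mul_assoc]
  · exact LStep.posW _ _
  · exact LStep.negW _ _

lemma lpath_translate {a c : M} {w : List (X ⊕ X)} (m : M) (h : LPath σ a w c) :
    LPath σ (m * a) w (m * c) := by
  induction h with
  | nil _ => exact LPath.nil _
  | cons h₁ h₂ ih => exact LPath.cons (lstep_translate σ m h₁) ih

end AuxProof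

theorem loop_problem_is_identity_language_of_inverse_hull {X M : Type*} [Monoid M]
    [IsRightCancelMul M] (σ : FreeMonoid X →* M) (hσ : Function.Surjective σ) :
    LoopProblem σ =
      {w : List (X ⊕ X) |
        FreeMonoid.lift
          (Sum.elim (fun x : X => rho (σ (FreeMonoid.of x)))
            (fun x : X => rhoInv (σ (FreeMonoid.of x))))
          (FreeMonoid.ofList w) = 1} := by
  ext w
  constructor
  · intro hw
    have hw' : LPath σ 1 w 1 := hw
    show _ = (1 : PMap M)
    funext m
    have : LPath σ (m * 1) w (m * 1) := lpath_translate σ m hw'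
    rw [mul_one] at this
    exact (lpath_iff σ w m m).mp this
  · intro hw
    have h1 : Ew σ w 1 = some 1 := by
      have : Ew σ w = 1 := hw
      rw [this]; rfl
    exact (lpath_iff σ w 1 1).mpr h1
end
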